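/- Let A = k⟨u,v⟩/(vu+uv) be the (-1)-quantum plane, and let α = -I₂ act on A by negating both u and v. Then the invariant ring A^⟨α⟩ is generated by u², v², and uv, and is a commutative ring isomorphic to k[x,y,z]/(xy + z²). -/

import Mathlib

/-!
The relation `vu = -uv` makes `u²` and `v²` central and lets every element of `A` be written as a
combination of monomials `uⁱvʲ`, on which `α` acts by `(-1)^(i+j)`. Hence `x + α x` always lies
in the span of the even monomials, which is the subalgebra `B` generated by `u²`, `v²` and `uv`;
as `2` is invertible, the fixed points of `α` are exactly `B`, and `B` is commutative because
`u²` and `v²` are central.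

Sending `x, y, z` to `u², v², uv` maps `k[x,y,z]` onto `B` and kills `xy + z²`, since
`(uv)² = -u²v²`. Modulo `xy + z²` every polynomial is `a(x,y) + b(x,y) z`. To see that this maps
to `0` only when `a = b = 0`, represent `A` by `4 × 4` matrices `U`, `V` over `k[s,t]` with
`U² = s` and `V² = t`: the image of `a + b z` is `a + b UV`, whose entries `(0,0)` and `(0,3)`
are `a` and `-b`.
-/

/-- The defining relation of the `(-1)`-quantum plane: `v * u = -(u * v)`. -/
inductive NegQRel (K : Type*) [Field K] :
    FreeAlgebra K (Fin 2) → FreeAlgebra K (Fin 2) → Prop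
  | rel : NegQRel K (FreeAlgebra.ι K 1 * FreeAlgebra.ι K 0)
      (-(FreeAlgebra.ι K 0 * FreeAlgebra.ι K 1))

/-- The `(-1)`-quantum plane `k_{-1}[u,v] = k⟨u,v⟩/(vu + uv)`. -/
abbrev NegQPlane (K : Type*) [Field K] := RingQuot (NegQRel K)

/-- The generator `u` of the `(-1)`-quantum plane. -/
noncomputable def NegQPlane.u (K : Type*) [Field K] : NegQPlane K :=
  RingQuot.mkAlgHom K (NegQRel K) (FreeAlgebra.ι K 0)

/-- The generator `v` of the `(-1)`-quantum plane. -/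
noncomputable def NegQPlane.v (K : Type*) [Field K] : NegQPlane K :=
  RingQuot.mkAlgHom K (NegQRel K) (FreeAlgebra.ι K 1)

namespace MvPolynomial

variable {R : Type*} [CommRing R]

theorem exists_sub_rename_add_rename_mul_X_mem_span (q : MvPolynomial (Fin 3) R) :
    ∃ a b : MvPolynomial (Fin 2) R,
      q - (rename Fin.castSucc a + rename Fin.castSucc b * X 2) ∈
        Ideal.span {X 0 * X 1 + X 2 ^ 2} := by
  induction q using MvPolynomial.induction_on with
  | C c => exact ⟨C c, 0, by simp⟩
  | add p q hp hq =>
    obtain ⟨a, b, h⟩ := hp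
    obtain ⟨a', b', h'⟩ := hq
    refine ⟨a + a', b + b', ?_⟩
    convert add_mem h h' using 1
    simp only [map_add]
    ring
  | mul_X p n hp =>
    obtain ⟨a, b, h⟩ := hp
    induction n using Fin.lastCases with
    | cast i =>
      refine ⟨a * X i, b * X i, ?_⟩
      convert Ideal.mul_mem_right (X i.castSucc) _ h using 1
      simp only [map_mul, rename_X]
      ring
    | last =>
      refine ⟨-(b * X 0 * X 1), a, ?_⟩
      convert add_mem (Ideal.mul_mem_right (X 2) _ h)
        (Ideal.mul_mem_left _ (rename Fin.castSucc b) (Ideal.mem_span_singleton_self _)) using 1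
      simp only [map_mul, map_neg, rename_X, Fin.castSucc_zero, Fin.castSucc_one,
        show Fin.last 2 = 2 from rfl]
      ring

end MvPolynomial

section SkewCommuting

variable {R A : Type*} [CommSemiring R] [Semiring A] [Algebra R A] {a b : A} {c : R}

theorem pow_mul_pow_of_mul_eq_smul (h : b * a = c • (a * b)) (m n : ℕ) :
    b ^ m * a ^ n = c ^ (m * n) • (a ^ n * b ^ m) := by
  have hb : ∀ k : ℕ, b * a ^ k = c ^ k • (a ^ k * b) := by
    intro k
    induction k with
    | zero => simp
    | succ k ih =>
      rw [pow_succ, ← mul_assoc, ih, smul_mul_assoc, mul_assoc, h, mul_smul_comm, smul_smul,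
        ← mul_assoc, ← pow_succ, ← pow_succ]
  induction m with
  | zero => simp
  | succ m ih =>
    rw [pow_succ, mul_assoc, hb, mul_smul_comm, ← mul_assoc, ih, smul_mul_assoc, smul_smul,
      ← pow_add, mul_assoc, ← pow_succ, Nat.succ_mul, add_comm]

theorem pow_mul_pow_mul_pow_mul_pow_of_mul_eq_smul (h : b * a = c • (a * b)) (i j k l : ℕ) :
    a ^ i * b ^ j * (a ^ k * b ^ l) = c ^ (j * k) • (a ^ (i + k) * b ^ (j + l)) := by
  rw [mul_assoc, ← mul_assoc (b ^ j), pow_mul_pow_of_mul_eq_smul h, smul_mul_assoc,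
    mul_smul_comm, mul_assoc, ← pow_add, ← mul_assoc, ← pow_add]

end SkewCommuting

namespace NegQPlane

open scoped IsMulCommutative

variable {K : Type*} [Field K]

/- Stated with `(-1 : K) •` rather than `-`: negation on `NegQPlane K` comes from a `Ring`
structure on the free algebra that is not reducibly compatible with its `Semiring` structure, so
lemmas about `-` do not rewrite here. -/
theorem v_mul_u : v K * u K = (-1 : K) • (u K * v K) := by
  have h := RingQuot.mkAlgHom_rel K (NegQRel.rel (K := K))
  rw [map_mul, map_neg, map_mul] at h
  exact h.trans (neg_one_smul K _).symm

theorem adjoin_u_v : Algebra.adjoin K {u K, v K} = ⊤ := by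
  have h := congrArg (Subalgebra.map (RingQuot.mkAlgHom K (NegQRel K)))
    (FreeAlgebra.adjoin_range_ι K (Fin 2))
  rw [AlgHom.map_adjoin, Algebra.map_top, (AlgHom.range_eq_top _).mpr
    (RingQuot.mkAlgHom_surjective K _), ← Set.range_comp, Fin.range_fin_succ,
    Set.range_unique] at h
  exact h

theorem span_pow_mul_pow :
    Submodule.span K (Set.range fun p : ℕ × ℕ => u K ^ p.1 * v K ^ p.2) = ⊤ := by
  set S := Submodule.span K (Set.range fun p : ℕ × ℕ => u K ^ p.1 * v K ^ p.2)
  have mem (i j : ℕ) : u K ^ i * v K ^ j ∈ S := Submodule.subset_span ⟨(i, j), rfl⟩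
  have mul_le : S * S ≤ S := by
    rw [Submodule.span_mul_span, Submodule.span_le]
    rintro _ ⟨_, ⟨⟨i, j⟩, rfl⟩, _, ⟨⟨k, l⟩, rfl⟩, rfl⟩
    dsimp only
    rw [SetLike.mem_coe, pow_mul_pow_mul_pow_mul_pow_of_mul_eq_smul (v_mul_u (K := K))]
    exact S.smul_mem _ (mem _ _)
  have adjoin_le : Algebra.adjoin K {u K, v K} ≤ S.toSubalgebra (by simpa using mem 0 0)
      (fun _ _ hx hy => mul_le (Submodule.mul_mem_mul hx hy)) := by
    refine Algebra.adjoin_le ?_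
    rintro _ (rfl | rfl)
    · simpa using mem 1 0
    · simpa using mem 0 1
  rw [adjoin_u_v] at adjoin_le
  exact eq_top_iff.mpr fun x _ => adjoin_le Algebra.mem_top

theorem commute_u_sq (x : NegQPlane K) : Commute (u K ^ 2) x := by
  refine Algebra.commute_of_mem_adjoin_of_forall_mem_commute
    (by rw [adjoin_u_v]; trivial) ?_
  rintro _ (rfl | rfl)
  · exact (Commute.refl _).pow_left 2
  · have h := pow_mul_pow_of_mul_eq_smul (v_mul_u (K := K)) 1 2
    rw [pow_one, one_mul, neg_one_sq, one_smul] at h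
    exact h.symm

theorem commute_v_sq (x : NegQPlane K) : Commute (v K ^ 2) x := by
  refine Algebra.commute_of_mem_adjoin_of_forall_mem_commute
    (by rw [adjoin_u_v]; trivial) ?_
  rintro _ (rfl | rfl)
  · have h := pow_mul_pow_of_mul_eq_smul (v_mul_u (K := K)) 2 1
    rw [pow_one, mul_one, neg_one_sq, one_smul] at h
    exact h
  · exact (Commute.refl _).pow_left 2

def evenSubalgebra (K : Type*) [Field K] : Subalgebra K (NegQPlane K) :=
  Algebra.adjoin K {u K ^ 2, v K ^ 2, u K * v K}

instance : IsMulCommutative (evenSubalgebra K) := by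
  refine Algebra.isMulCommutative_adjoin K ?_
  rintro x (rfl | rfl | rfl) y hy
  · exact commute_u_sq y
  · exact commute_v_sq y
  · rcases hy with rfl | rfl | rfl
    · exact (commute_u_sq _).symm
    · exact (commute_v_sq _).symm
    · rfl

theorem commute_of_mem_evenSubalgebra {x y : NegQPlane K} (hx : x ∈ evenSubalgebra K)
    (hy : y ∈ evenSubalgebra K) : Commute x y :=
  congrArg Subtype.val (mul_comm (⟨x, hx⟩ : evenSubalgebra K) ⟨y, hy⟩)

theorem u_sq_mem_evenSubalgebra : u K ^ 2 ∈ evenSubalgebra K :=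
  Algebra.subset_adjoin (by simp)

theorem v_sq_mem_evenSubalgebra : v K ^ 2 ∈ evenSubalgebra K :=
  Algebra.subset_adjoin (by simp)

theorem u_mul_v_mem_evenSubalgebra : u K * v K ∈ evenSubalgebra K :=
  Algebra.subset_adjoin (by simp)

theorem pow_mul_pow_mem_evenSubalgebra {i j : ℕ} (h : Even (i + j)) :
    u K ^ i * v K ^ j ∈ evenSubalgebra K := by
  have hu := u_sq_mem_evenSubalgebra (K := K)
  have hv := v_sq_mem_evenSubalgebra (K := K)
  have huv := u_mul_v_mem_evenSubalgebra (K := K)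
  obtain ⟨a, rfl | rfl⟩ := Nat.even_or_odd' i <;> obtain ⟨b, rfl | rfl⟩ := Nat.even_or_odd' j
  · rw [pow_mul, pow_mul]
    exact mul_mem (pow_mem hu a) (pow_mem hv b)
  · simp [parity_simps] at h
  · simp [parity_simps] at h
  · rw [pow_succ, pow_succ', pow_mul, pow_mul, mul_assoc, ← mul_assoc (u K)]
    exact mul_mem (pow_mem hu a) (mul_mem huv (pow_mem hv b))

section Invariants

variable {α : NegQPlane K →ₐ[K] NegQPlane K}

theorem map_pow_mul_pow (hu : α (u K) = -u K) (hv : α (v K) = -v K) (i j : ℕ) :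
    α (u K ^ i * v K ^ j) = (-1 : K) ^ (i + j) • (u K ^ i * v K ^ j) := by
  rw [map_mul, map_pow, map_pow, hu, hv, ← neg_one_smul K (u K), ← neg_one_smul K (v K),
    smul_pow, smul_pow, smul_mul_smul_comm, ← pow_add]

theorem add_map_mem_evenSubalgebra (hu : α (u K) = -u K) (hv : α (v K) = -v K)
    (x : NegQPlane K) : x + α x ∈ evenSubalgebra K := by
  have hx : x ∈ Submodule.span K (Set.range fun p : ℕ × ℕ => u K ^ p.1 * v K ^ p.2) := by
    rw [span_pow_mul_pow]; trivial
  induction hx using Submodule.span_induction with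
  | mem _ hm =>
    obtain ⟨⟨i, j⟩, rfl⟩ := hm
    dsimp only
    rw [map_pow_mul_pow hu hv]
    rcases Nat.even_or_odd (i + j) with h | h
    · rw [h.neg_one_pow, one_smul]
      exact add_mem (pow_mul_pow_mem_evenSubalgebra h) (pow_mul_pow_mem_evenSubalgebra h)
    · rw [h.neg_one_pow, show ∀ y : NegQPlane K, y + (-1 : K) • y = 0 by intro; module]
      exact zero_mem _
  | zero => simp
  | add x y _ _ hx hy =>
    rw [map_add, add_add_add_comm]
    exact add_mem hx hy
  | smul r x _ hx =>
    rw [map_smul, ← smul_add]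
    exact Subalgebra.smul_mem _ hx r

theorem equalizer_eq_evenSubalgebra [NeZero (2 : K)] (hu : α (u K) = -u K)
    (hv : α (v K) = -v K) :
    AlgHom.equalizer α (AlgHom.id K _) = evenSubalgebra K := by
  refine le_antisymm (fun x hx => ?_) (Algebra.adjoin_le ?_)
  · have h2x := add_map_mem_evenSubalgebra hu hv x
    rw [show α x = x from hx, ← two_smul K x] at h2x
    simpa [NeZero.ne (2 : K)] using (evenSubalgebra K).smul_mem h2x (2 : K)⁻¹
  · rintro _ (rfl | rfl | rfl) <;>
      simp only [SetLike.mem_coe, AlgHom.mem_equalizer, map_pow, map_mul, hu, hv, AlgHom.id_apply]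
    exacts [neg_sq (u K), neg_sq (v K), neg_mul_neg (u K) (v K)]

end Invariants

open MvPolynomial

noncomputable def toEvenSubalgebra : MvPolynomial (Fin 3) K →ₐ[K] evenSubalgebra K :=
  aeval ![⟨u K ^ 2, u_sq_mem_evenSubalgebra⟩, ⟨v K ^ 2, v_sq_mem_evenSubalgebra⟩,
    ⟨u K * v K, u_mul_v_mem_evenSubalgebra⟩]

theorem toEvenSubalgebra_surjective : Function.Surjective (toEvenSubalgebra (K := K)) := by
  rw [← AlgHom.range_eq_top, toEvenSubalgebra, aeval_range]
  refine Eq.trans ?_ Algebra.adjoin_adjoin_coe_preimage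
  congr 1
  ext ⟨x, hx⟩
  change _ ↔ x ∈ ({u K ^ 2, v K ^ 2, u K * v K} : Set (NegQPlane K))
  simp only [Matrix.range_cons, Matrix.range_empty, Set.union_empty, Set.union_singleton,
    Set.union_insert, Set.mem_insert_iff, Subtype.mk.injEq, Set.mem_singleton_iff]
  tauto

theorem toEvenSubalgebra_X_mul_X_add_X_sq :
    toEvenSubalgebra (K := K) (X 0 * X 1 + X 2 ^ 2) = 0 := by
  have h := pow_mul_pow_mul_pow_mul_pow_of_mul_eq_smul (v_mul_u (K := K)) 1 1 1 1
  simp only [pow_one, mul_one, Nat.reduceAdd] at h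
  apply Subtype.ext
  simp only [toEvenSubalgebra, map_add, map_mul, map_pow, aeval_X, Matrix.cons_val_zero,
    Matrix.cons_val_one, Matrix.cons_val, MulMemClass.mk_mul_mk, SubmonoidClass.mk_pow,
    AddMemClass.mk_add_mk, ZeroMemClass.coe_zero, pow_two (u K * v K), h]
  module

section Representation

variable (K)

/- `repU = [[0, 1], [s, 0]] ⊗ 1` and `repV = diag(1, -1) ⊗ [[0, 1], [t, 0]]`, where `s = X 0` and
`t = X 1`. -/
noncomputable def repU : Matrix (Fin 4) (Fin 4) (MvPolynomial (Fin 2) K) :=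
  !![0, 0, 1, 0; 0, 0, 0, 1; X 0, 0, 0, 0; 0, X 0, 0, 0]

noncomputable def repV : Matrix (Fin 4) (Fin 4) (MvPolynomial (Fin 2) K) :=
  !![0, 1, 0, 0; X 1, 0, 0, 0; 0, 0, 0, -1; 0, 0, -X 1, 0]

theorem repV_mul_repU : repV K * repU K = -(repU K * repV K) := by
  refine Matrix.ext fun i j => ?_
  fin_cases i <;> fin_cases j <;>
    simp [repU, repV, Matrix.mul_apply, Fin.sum_univ_four, mul_comm]

theorem repU_mul_repU : repU K * repU K = algebraMap (MvPolynomial (Fin 2) K) _ (X 0) := by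
  refine Matrix.ext fun i j => ?_
  fin_cases i <;> fin_cases j <;>
    simp [repU, Matrix.mul_apply, Fin.sum_univ_four, Matrix.algebraMap_matrix_apply]

theorem repV_mul_repV : repV K * repV K = algebraMap (MvPolynomial (Fin 2) K) _ (X 1) := by
  refine Matrix.ext fun i j => ?_
  fin_cases i <;> fin_cases j <;>
    simp [repV, Matrix.mul_apply, Fin.sum_univ_four, Matrix.algebraMap_matrix_apply]

noncomputable def rep : NegQPlane K →ₐ[K] Matrix (Fin 4) (Fin 4) (MvPolynomial (Fin 2) K) :=
  RingQuot.liftAlgHom K ⟨FreeAlgebra.lift K ![repU K, repV K], by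
    rintro _ _ ⟨⟩
    simpa using repV_mul_repU K⟩

theorem rep_u : rep K (u K) = repU K := by
  simp [rep, NegQPlane.u]

theorem rep_v : rep K (v K) = repV K := by
  simp [rep, NegQPlane.v]

end Representation

theorem eq_zero_of_algebraMap_add_algebraMap_mul_repU_mul_repV_eq_zero
    {a b : MvPolynomial (Fin 2) K}
    (h : algebraMap _ _ a + algebraMap _ _ b * (repU K * repV K) = 0) : a = 0 ∧ b = 0 := by
  constructor
  · simpa [repU, repV, Matrix.mul_apply, Fin.sum_univ_four, Matrix.algebraMap_matrix_apply]
      using congrFun (congrFun h 0) 0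
  · simpa [repU, repV, Matrix.mul_apply, Fin.sum_univ_four, Matrix.algebraMap_matrix_apply]
      using congrFun (congrFun h 0) 3

theorem ker_toEvenSubalgebra :
    RingHom.ker (toEvenSubalgebra (K := K)) = Ideal.span {X 0 * X 1 + X 2 ^ 2} := by
  have span_le : Ideal.span {X 0 * X 1 + X 2 ^ 2} ≤ RingHom.ker (toEvenSubalgebra (K := K)) :=
    Ideal.span_le.mpr (Set.singleton_subset_iff.mpr toEvenSubalgebra_X_mul_X_add_X_sq)
  refine le_antisymm (fun q hq => ?_) span_le
  set ρ := (rep K).comp ((evenSubalgebra K).val.comp toEvenSubalgebra)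
  have ρ_rename (a : MvPolynomial (Fin 2) K) : ρ (rename Fin.castSucc a) = algebraMap _ _ a := by
    suffices ρ.comp (rename Fin.castSucc) = IsScalarTower.toAlgHom K _ _ from
      DFunLike.congr_fun this a
    refine MvPolynomial.algHom_ext fun i => ?_
    fin_cases i
    · simp [ρ, toEvenSubalgebra, rep_u, pow_two, repU_mul_repU]
    · simp [ρ, toEvenSubalgebra, rep_v, pow_two, repV_mul_repV]
  have ρ_X : ρ (X 2) = repU K * repV K := by
    simp [ρ, toEvenSubalgebra, rep_u, rep_v]
  obtain ⟨a, b, hab⟩ := exists_sub_rename_add_rename_mul_X_mem_span q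
  have hnf :
      rename Fin.castSucc a + rename Fin.castSucc b * X 2 ∈ RingHom.ker toEvenSubalgebra := by
    simpa using sub_mem hq (span_le hab)
  have hρ : ρ (rename Fin.castSucc a + rename Fin.castSucc b * X 2) = 0 := by
    simp [ρ, RingHom.mem_ker.mp hnf]
  rw [map_add, map_mul, ρ_rename, ρ_rename, ρ_X] at hρ
  obtain ⟨rfl, rfl⟩ := eq_zero_of_algebraMap_add_algebraMap_mul_repU_mul_repV_eq_zero hρ
  simpa using hab

end NegQPlane

open MvPolynomial in
theorem negQPlane_invariants_of_negation_general {K : Type*} [Field K] [CharZero K]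
    (α : NegQPlane K ≃ₐ[K] NegQPlane K)
    (hαu : α (NegQPlane.u K) = -NegQPlane.u K) (hαv : α (NegQPlane.v K) = -NegQPlane.v K) :
    AlgHom.equalizer α.toAlgHom (AlgHom.id K (NegQPlane K)) =
      Algebra.adjoin K
        {NegQPlane.u K ^ 2, NegQPlane.v K ^ 2, NegQPlane.u K * NegQPlane.v K} ∧
    (∀ x y : NegQPlane K, α x = x → α y = y → x * y = y * x) ∧
    Nonempty ((AlgHom.equalizer α.toAlgHom (AlgHom.id K (NegQPlane K))) ≃ₐ[K]
      (MvPolynomial (Fin 3) K ⧸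
        Ideal.span {(X 0 * X 1 + X 2 ^ 2 : MvPolynomial (Fin 3) K)})) := by
  have heq : AlgHom.equalizer α.toAlgHom (AlgHom.id K _) = NegQPlane.evenSubalgebra K :=
    NegQPlane.equalizer_eq_evenSubalgebra hαu hαv
  refine ⟨heq, fun x y hx hy => ?_, ⟨?_⟩⟩
  · exact NegQPlane.commute_of_mem_evenSubalgebra (heq ▸ hx) (heq ▸ hy)
  · exact (Subalgebra.equivOfEq _ _ heq).trans <|
      (Ideal.quotientKerAlgEquivOfSurjective NegQPlane.toEvenSubalgebra_surjective).symm.trans <|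
        Ideal.quotientEquivAlgOfEq K NegQPlane.ker_toEvenSubalgebra

open MvPolynomial in
/-- Let `α` be the automorphism of `A = k_{-1}[u,v]` negating `u` and `v`. Then the
invariant ring `A^⟨α⟩` is generated (as a `k`-algebra) by `u²`, `v²` and `uv`, is
commutative, and is isomorphic to `k[x,y,z]/(xy + z²)`. -/
theorem negQPlane_invariants_of_negation {K : Type*} [Field K] [IsAlgClosed K] [CharZero K]
    (α : NegQPlane K ≃ₐ[K] NegQPlane K)
    (hαu : α (NegQPlane.u K) = -NegQPlane.u K) (hαv : α (NegQPlane.v K) = -NegQPlane.v K) :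
    AlgHom.equalizer α.toAlgHom (AlgHom.id K (NegQPlane K)) =
      Algebra.adjoin K
        {NegQPlane.u K ^ 2, NegQPlane.v K ^ 2, NegQPlane.u K * NegQPlane.v K} ∧
    (∀ x y : NegQPlane K, α x = x → α y = y → x * y = y * x) ∧
    Nonempty ((AlgHom.equalizer α.toAlgHom (AlgHom.id K (NegQPlane K))) ≃ₐ[K]
      (MvPolynomial (Fin 3) K ⧸
        Ideal.span {(X 0 * X 1 + X 2 ^ 2 : MvPolynomial (Fin 3) K)})) :=
  negQPlane_invariants_of_negation_general α hαu hαv
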